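/- Let 𝒜 ∈ ℝ^{n₁×n₂×n₃} be nonzero and let (x₁⁰, x₂⁰, x₃⁰) be generated by Algorithm C0 (truncated leading singular vector of the mode-1 unfolding A₁, then of A₂ = reshape(A₁ᵀx₁⁰, n₂, n₃), then r₃-truncation of A₂ᵀ x₂⁰). Then 𝒜(x₁⁰, x₂⁰, x₃⁰) ≥ √(r₁r₂r₃/(n₁n₂²n₃)) · λ_max(A₁) ≥ √(r₁r₂r₃/(n₁n₂²n₃)) · v_opt, where v_opt is the maximum of 𝒜(x₁,x₂,x₃) over unit vectors x_j with ‖x_j‖₀ ≤ r_j. -/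

import Mathlib

open Finset

noncomputable def enormE {ι : Type*} [Fintype ι] (x : ι → ℝ) : ℝ :=
  Real.sqrt (∑ i, x i ^ 2)

def dot {ι : Type*} [Fintype ι] (x y : ι → ℝ) : ℝ := ∑ i, x i * y i

noncomputable def l0 {ι : Type*} [Fintype ι] (x : ι → ℝ) : ℕ :=
  (Finset.univ.filter fun i => x i ≠ 0).card

def IsTrunc {ι : Type*} [Fintype ι] [DecidableEq ι] (a : ι → ℝ) (r : ℕ) (ar : ι → ℝ) : Prop :=
  ∃ S : Finset ι, S.card = r ∧ (∀ i ∈ S, ar i = a i) ∧ (∀ i ∉ S, ar i = 0) ∧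
    ∀ i ∈ S, ∀ j ∉ S, |a j| ≤ |a i|

noncomputable def lmax {m n' : Type*} [Fintype m] [Fintype n'] (A : Matrix m n' ℝ) : ℝ :=
  sSup {c | ∃ x : n' → ℝ, enormE x = 1 ∧ c = enormE (A.mulVec x)}

noncomputable def fnorm {m n' : Type*} [Fintype m] [Fintype n'] (A : Matrix m n' ℝ) : ℝ :=
  Real.sqrt (∑ i, ∑ j, A i j ^ 2)

def tri {n1 n2 n3 : ℕ} (A : Fin n1 → Fin n2 → Fin n3 → ℝ)
    (x : Fin n1 → ℝ) (y : Fin n2 → ℝ) (z : Fin n3 → ℝ) : ℝ :=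
  ∑ i, ∑ j, ∑ k, A i j k * x i * y j * z k

def mlin {d : ℕ} {n : Fin d → ℕ} (A : (∀ j, Fin (n j)) → ℝ)
    (x : ∀ j, Fin (n j) → ℝ) : ℝ :=
  ∑ i, A i * ∏ j, x j (i j)

/-!
Write `λ = λ_max(A₁)` and let `(x̄₁, w̄₁)` be the singular pair. Pairing with `w̄₁` gives
`⟨A₁ᵀx₁, w̄₁⟩ = λ ⟨x₁, x̄₁⟩ = λ ‖t₁‖`, and keeping the `r` largest of the `n` entries of a unit
vector retains energy at least `r / n`; hence `‖A₂‖_F² = ‖A₁ᵀx₁‖² ≥ λ² r₁ / n₁`. Every row of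
`A₂` has norm at most `λ_max(A₂)`, so `λ_max(A₂)² ≥ ‖A₂‖_F² / n₂`, and the same pairing argument
gives `‖A₂ᵀx₂‖² ≥ λ_max(A₂)² r₂ / n₂`. Finally `𝒜(x₁, x₂, x₃) = ⟨A₂ᵀx₂, x₃⟩ = ‖t₃‖` and
`‖t₃‖² ≥ (r₃ / n₃) ‖A₂ᵀx₂‖²`. For the second inequality, `𝒜(y₁, y₂, y₃) = ⟨y₁, A₁ (y₂ ⊗ y₃)⟩ ≤ λ`
whenever the `yⱼ` are unit vectors.
-/

open Matrix

section Euclidean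

variable {ι : Type*} [Fintype ι]

lemma enormE_nonneg (x : ι → ℝ) : 0 ≤ enormE x := Real.sqrt_nonneg _

lemma sq_enormE (x : ι → ℝ) : enormE x ^ 2 = ∑ i, x i ^ 2 :=
  Real.sq_sqrt (by positivity)

lemma dotProduct_self_eq_sq_enormE (x : ι → ℝ) : x ⬝ᵥ x = enormE x ^ 2 := by
  rw [sq_enormE]
  simp only [dotProduct, sq]

lemma enormE_eq_zero_iff {x : ι → ℝ} : enormE x = 0 ↔ x = 0 := by
  rw [← pow_eq_zero_iff two_ne_zero, ← dotProduct_self_eq_sq_enormE, dotProduct_self_eq_zero]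

lemma dotProduct_le_enormE_mul (x y : ι → ℝ) : x ⬝ᵥ y ≤ enormE x * enormE y :=
  Real.sum_mul_le_sqrt_mul_sqrt _ _ _

lemma sq_dotProduct_le (x y : ι → ℝ) : (x ⬝ᵥ y) ^ 2 ≤ enormE x ^ 2 * enormE y ^ 2 := by
  rw [sq_enormE, sq_enormE]
  exact Finset.sum_mul_sq_le_sq_mul_sq _ _ _

lemma abs_le_enormE (x : ι → ℝ) (i : ι) : |x i| ≤ enormE x :=
  Real.abs_le_sqrt (Finset.single_le_sum (fun j _ => sq_nonneg (x j)) (Finset.mem_univ i))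

lemma enormE_div (x : ι → ℝ) {c : ℝ} (hc : 0 ≤ c) :
    enormE (fun i => x i / c) = enormE x / c := by
  simp only [enormE, div_pow, ← Finset.sum_div]
  rw [Real.sqrt_div' _ (sq_nonneg c), Real.sqrt_sq hc]

lemma enormE_prod_mul {κ : Type*} [Fintype κ] (y : ι → ℝ) (z : κ → ℝ) :
    enormE (fun p : ι × κ => y p.1 * z p.2) = enormE y * enormE z := by
  simp only [enormE, mul_pow, Fintype.sum_prod_type, ← Finset.mul_sum, ← Finset.sum_mul]
  exact Real.sqrt_mul (by positivity) _

end Euclidean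

section Truncation

variable {ι : Type*} [Fintype ι] [DecidableEq ι] {a t : ι → ℝ} {r : ℕ}

lemma IsTrunc.dotProduct_eq (h : IsTrunc a r t) : t ⬝ᵥ a = enormE t ^ 2 := by
  obtain ⟨S, -, hin, hout, -⟩ := h
  rw [← dotProduct_self_eq_sq_enormE]
  refine Finset.sum_congr rfl fun i _ => ?_
  by_cases hi : i ∈ S
  · rw [hin i hi]
  · simp [hout i hi]

/-- Holds also for `t = 0`, where the normalized vector is `0` by `x / 0 = 0`. -/
lemma IsTrunc.normalize_dotProduct (h : IsTrunc a r t) :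
    (fun i => t i / enormE t) ⬝ᵥ a = enormE t := by
  simp only [dotProduct, div_mul_eq_mul_div, ← Finset.sum_div]
  rw [← dotProduct, h.dotProduct_eq, sq, mul_self_div_self]

lemma IsTrunc.card_mul_sum_sq_le (h : IsTrunc a r t) :
    (r : ℝ) * ∑ i, a i ^ 2 ≤ Fintype.card ι * ∑ i, t i ^ 2 := by
  obtain ⟨S, rfl, hin, hout, hmax⟩ := h
  have hkept : ∑ i, t i ^ 2 = ∑ i ∈ S, a i ^ 2 := by
    rw [← Finset.sum_subset (Finset.subset_univ S) fun i _ hi => by simp [hout i hi]]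
    exact Finset.sum_congr rfl fun i hi => by rw [hin i hi]
  have hcross : (S.card : ℝ) * ∑ j ∈ Sᶜ, a j ^ 2 ≤ Sᶜ.card * ∑ i ∈ S, a i ^ 2 :=
    calc (S.card : ℝ) * ∑ j ∈ Sᶜ, a j ^ 2 = ∑ _i ∈ S, ∑ j ∈ Sᶜ, a j ^ 2 := by
          rw [Finset.sum_const, nsmul_eq_mul]
      _ ≤ ∑ i ∈ S, ∑ _j ∈ Sᶜ, a i ^ 2 :=
          Finset.sum_le_sum fun i hi => Finset.sum_le_sum fun j hj =>
            sq_le_sq.2 (hmax i hi j (Finset.mem_compl.1 hj))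
      _ = Sᶜ.card * ∑ i ∈ S, a i ^ 2 := by
          rw [Finset.sum_comm, Finset.sum_const, nsmul_eq_mul]
  rw [hkept, ← Finset.sum_add_sum_compl S, ← Finset.card_add_card_compl S]
  push_cast
  linarith

lemma IsTrunc.div_card_mul_sq_enormE_le (h : IsTrunc a r t) :
    r / Fintype.card ι * enormE a ^ 2 ≤ enormE t ^ 2 := by
  rcases (Nat.cast_nonneg (α := ℝ) (Fintype.card ι)).eq_or_lt with hn | hn
  · rw [← hn, div_zero, zero_mul]
    positivity
  · rw [div_mul_eq_mul_div, div_le_iff₀ hn, sq_enormE, sq_enormE]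
    linarith [h.card_mul_sum_sq_le]

end Truncation

section SpectralNorm

variable {m n : Type*} [Fintype m] [Fintype n]

lemma enormE_mulVec_le_fnorm_mul (M : Matrix m n ℝ) (x : n → ℝ) :
    enormE (M *ᵥ x) ≤ fnorm M * enormE x := by
  rw [enormE, Real.sqrt_le_left (y := fnorm M * enormE x)
      (mul_nonneg (Real.sqrt_nonneg _) (enormE_nonneg x)), mul_pow,
    fnorm, Real.sq_sqrt (by positivity), sq_enormE, Finset.sum_mul]
  exact Finset.sum_le_sum fun i _ => Finset.sum_mul_sq_le_sq_mul_sq _ _ _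

lemma bddAbove_lmax_set (M : Matrix m n ℝ) :
    BddAbove {c | ∃ x : n → ℝ, enormE x = 1 ∧ c = enormE (M *ᵥ x)} := by
  refine ⟨fnorm M, ?_⟩
  rintro _ ⟨x, hx, rfl⟩
  simpa [hx] using enormE_mulVec_le_fnorm_mul M x

lemma lmax_nonneg (M : Matrix m n ℝ) : 0 ≤ lmax M :=
  Real.sSup_nonneg fun _ ⟨_, _, hc⟩ => hc ▸ enormE_nonneg _

lemma enormE_mulVec_le (M : Matrix m n ℝ) (x : n → ℝ) :
    enormE (M *ᵥ x) ≤ lmax M * enormE x := by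
  rcases (enormE_nonneg x).eq_or_lt with hx | hx
  · rw [← hx, enormE_eq_zero_iff.1 hx.symm, mulVec_zero, mul_zero]
    exact (enormE_eq_zero_iff.2 rfl).le
  · have hunit : enormE (fun j => x j / enormE x) = 1 := by
      rw [enormE_div x hx.le, div_self hx.ne']
    have hscale : M *ᵥ (fun j => x j / enormE x) = fun i => (M *ᵥ x) i / enormE x := by
      funext i
      simp only [mulVec, dotProduct, mul_div_assoc', Finset.sum_div]
    have hle := le_csSup (bddAbove_lmax_set M) ⟨_, hunit, rfl⟩
    rwa [hscale, enormE_div _ hx.le, div_le_iff₀ hx] at hle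

lemma sq_enormE_row_le (M : Matrix m n ℝ) (i : m) : enormE (M i) ^ 2 ≤ lmax M ^ 2 := by
  have h : enormE (M i) ^ 2 ≤ lmax M * enormE (M i) :=
    calc enormE (M i) ^ 2 = (M *ᵥ M i) i := (dotProduct_self_eq_sq_enormE _).symm
      _ ≤ |(M *ᵥ M i) i| := le_abs_self _
      _ ≤ enormE (M *ᵥ M i) := abs_le_enormE _ i
      _ ≤ lmax M * enormE (M i) := enormE_mulVec_le M _
  nlinarith [enormE_nonneg (M i), lmax_nonneg M]

lemma sum_sum_sq_le_card_mul_sq_lmax (M : Matrix m n ℝ) :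
    ∑ i, ∑ j, M i j ^ 2 ≤ Fintype.card m * lmax M ^ 2 :=
  calc ∑ i, ∑ j, M i j ^ 2 = ∑ i, enormE (M i) ^ 2 :=
        Finset.sum_congr rfl fun i _ => (sq_enormE _).symm
    _ ≤ ∑ _i : m, lmax M ^ 2 := Finset.sum_le_sum fun i _ => sq_enormE_row_le M i
    _ = Fintype.card m * lmax M ^ 2 := by
        rw [Finset.sum_const, Finset.card_univ, nsmul_eq_mul]

/-- One step of Algorithm C0: `t` truncates the left singular vector `xb` of `M` for the
singular value `σ`, and `Mᵀ` is applied to the normalized truncation. -/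
lemma sq_mul_div_card_le_sq_enormE_transpose_mulVec [DecidableEq m] {M : Matrix m n ℝ}
    {σ : ℝ} {xb t : m → ℝ} {wb : n → ℝ} {r : ℕ} (hsv : M *ᵥ wb = fun i => σ * xb i)
    (hxb : enormE xb = 1) (hwb : enormE wb = 1) (ht : IsTrunc xb r t) :
    σ ^ 2 * (r / Fintype.card m) ≤ enormE (Mᵀ *ᵥ fun i => t i / enormE t) ^ 2 := by
  have hpair : (Mᵀ *ᵥ fun i => t i / enormE t) ⬝ᵥ wb = σ * enormE t := by
    rw [mulVec_transpose, ← dotProduct_mulVec, show M *ᵥ wb = σ • xb from hsv, dotProduct_smul,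
      ht.normalize_dotProduct, smul_eq_mul]
  have htrunc := ht.div_card_mul_sq_enormE_le
  rw [hxb, one_pow, mul_one] at htrunc
  calc σ ^ 2 * (r / Fintype.card m) ≤ σ ^ 2 * enormE t ^ 2 :=
        mul_le_mul_of_nonneg_left htrunc (sq_nonneg σ)
    _ = ((Mᵀ *ᵥ fun i => t i / enormE t) ⬝ᵥ wb) ^ 2 := by rw [hpair, mul_pow]
    _ ≤ enormE (Mᵀ *ᵥ fun i => t i / enormE t) ^ 2 * enormE wb ^ 2 := sq_dotProduct_le _ _
    _ = enormE (Mᵀ *ᵥ fun i => t i / enormE t) ^ 2 := by rw [hwb, one_pow, mul_one]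

end SpectralNorm

section Trilinear

variable {n1 n2 n3 : ℕ} (A : Fin n1 → Fin n2 → Fin n3 → ℝ)

def modeOneUnfolding : Matrix (Fin n1) (Fin n2 × Fin n3) ℝ := fun i jk => A i jk.1 jk.2

lemma tri_eq_dotProduct_modeOneUnfolding_mulVec (x : Fin n1 → ℝ) (y : Fin n2 → ℝ)
    (z : Fin n3 → ℝ) :
    tri A x y z = x ⬝ᵥ (modeOneUnfolding A *ᵥ fun p => y p.1 * z p.2) := by
  simp only [tri, dotProduct, mulVec, modeOneUnfolding, Fintype.sum_prod_type, Finset.mul_sum]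
  exact Finset.sum_congr rfl fun i _ => Finset.sum_congr rfl fun j _ =>
    Finset.sum_congr rfl fun k _ => by ring

lemma tri_eq_dotProduct_reshape (x : Fin n1 → ℝ) (y : Fin n2 → ℝ) (z : Fin n3 → ℝ) :
    tri A x y z =
      ((fun j k => ((modeOneUnfolding A)ᵀ *ᵥ x) (j, k) : Matrix (Fin n2) (Fin n3) ℝ)ᵀ *ᵥ y) ⬝ᵥ z := by
  rw [tri_eq_dotProduct_modeOneUnfolding_mulVec, dotProduct_mulVec, ← mulVec_transpose]
  simp only [dotProduct, mulVec, transpose_apply, Fintype.sum_prod_type, Finset.sum_mul]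
  rw [Finset.sum_comm]
  refine Finset.sum_congr rfl fun k _ => Finset.sum_congr rfl fun j _ => ?_
  show _ = (∑ i : Fin n1, _) * y j * z k
  rw [Finset.sum_mul, Finset.sum_mul]
  exact Finset.sum_congr rfl fun i _ => by ring

lemma tri_le_lmax_modeOneUnfolding {y1 : Fin n1 → ℝ} {y2 : Fin n2 → ℝ} {y3 : Fin n3 → ℝ}
    (hy1 : enormE y1 = 1) (hy2 : enormE y2 = 1) (hy3 : enormE y3 = 1) :
    tri A y1 y2 y3 ≤ lmax (modeOneUnfolding A) :=
  calc tri A y1 y2 y3 = y1 ⬝ᵥ (modeOneUnfolding A *ᵥ fun p => y2 p.1 * y3 p.2) :=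
        tri_eq_dotProduct_modeOneUnfolding_mulVec A y1 y2 y3
    _ ≤ enormE (modeOneUnfolding A *ᵥ fun p => y2 p.1 * y3 p.2) := by
        simpa [hy1] using dotProduct_le_enormE_mul y1 _
    _ ≤ lmax (modeOneUnfolding A) * enormE (fun p : Fin n2 × Fin n3 => y2 p.1 * y3 p.2) :=
        enormE_mulVec_le _ _
    _ = lmax (modeOneUnfolding A) := by rw [enormE_prod_mul, hy2, hy3, mul_one, mul_one]

end Trilinear

theorem stmt_12_general {n1 n2 n3 : ℕ} (A : Fin n1 → Fin n2 → Fin n3 → ℝ)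
    (r1 r2 r3 : ℕ)
    -- mode-1 unfolding A₁
    (A1 : Matrix (Fin n1) (Fin n2 × Fin n3) ℝ) (hA1 : A1 = fun i jk => A i jk.1 jk.2)
    -- leading singular vector pair of A₁ and truncation
    (xb1 : Fin n1 → ℝ) (wb1 : Fin n2 × Fin n3 → ℝ)
    (hxb1 : enormE xb1 = 1) (hwb1 : enormE wb1 = 1)
    (hsv11 : A1.mulVec wb1 = fun i => lmax A1 * xb1 i)
    (t1 : Fin n1 → ℝ) (ht1 : IsTrunc xb1 r1 t1)
    (x1 : Fin n1 → ℝ) (hx1 : x1 = fun i => t1 i / enormE t1)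
    -- A₂ = reshape(A₁ᵀ x₁⁰, n₂, n₃), its leading singular pair and truncation
    (A2 : Matrix (Fin n2) (Fin n3) ℝ) (hA2 : A2 = fun j k => A1.transpose.mulVec x1 (j, k))
    (xb2 : Fin n2 → ℝ) (wb2 : Fin n3 → ℝ)
    (hxb2 : enormE xb2 = 1) (hwb2 : enormE wb2 = 1)
    (hsv21 : A2.mulVec wb2 = fun j => lmax A2 * xb2 j)
    (t2 : Fin n2 → ℝ) (ht2 : IsTrunc xb2 r2 t2)
    (x2 : Fin n2 → ℝ) (hx2 : x2 = fun j => t2 j / enormE t2)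
    -- x₃⁰ = normalized r₃-truncation of A₂ᵀx₂⁰
    (t3 : Fin n3 → ℝ) (ht3 : IsTrunc (A2.transpose.mulVec x2) r3 t3)
    (x3 : Fin n3 → ℝ) (hx3 : x3 = fun k => t3 k / enormE t3) :
    tri A x1 x2 x3 ≥
        Real.sqrt ((r1 : ℝ) * r2 * r3 / ((n1 : ℝ) * n2 ^ 2 * n3)) * lmax A1 ∧
      ∀ y1 y2 y3, enormE y1 = 1 → l0 y1 ≤ r1 → enormE y2 = 1 → l0 y2 ≤ r2 →
        enormE y3 = 1 → l0 y3 ≤ r3 →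
        Real.sqrt ((r1 : ℝ) * r2 * r3 / ((n1 : ℝ) * n2 ^ 2 * n3)) * tri A y1 y2 y3 ≤
          tri A x1 x2 x3 := by
  obtain rfl : A1 = modeOneUnfolding A := hA1
  subst hx1 hx2 hx3
  have hstep1 := sq_mul_div_card_le_sq_enormE_transpose_mulVec hsv11 hxb1 hwb1 ht1
  have hstep2 := sq_mul_div_card_le_sq_enormE_transpose_mulVec hsv21 hxb2 hwb2 ht2
  have hstep3 := ht3.div_card_mul_sq_enormE_le
  have hreshape : enormE ((modeOneUnfolding A)ᵀ *ᵥ fun i => t1 i / enormE t1) ^ 2 ≤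
      n2 * lmax A2 ^ 2 := by
    simpa [sq_enormE, Fintype.sum_prod_type, hA2] using sum_sum_sq_le_card_mul_sq_lmax A2
  simp only [Fintype.card_fin] at hstep1 hstep2 hstep3
  have hsq : (r1 : ℝ) * r2 * r3 / (n1 * n2 ^ 2 * n3) * lmax (modeOneUnfolding A) ^ 2 ≤
      enormE t3 ^ 2 :=
    calc _ = r3 / n3 * (r2 / n2 * (lmax (modeOneUnfolding A) ^ 2 * (r1 / n1) / n2)) := by ring
      _ ≤ r3 / n3 * (lmax A2 ^ 2 * (r2 / n2)) := by
          rw [mul_comm (lmax A2 ^ 2)]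
          gcongr
          exact div_le_of_le_mul₀ (by positivity) (sq_nonneg _) (hstep1.trans (hreshape.trans_eq (mul_comm _ _)))
      _ ≤ enormE t3 ^ 2 := (mul_le_mul_of_nonneg_left hstep2 (by positivity)).trans hstep3
  have hmain : Real.sqrt ((r1 : ℝ) * r2 * r3 / (n1 * n2 ^ 2 * n3)) * lmax (modeOneUnfolding A) ≤
      tri A _ _ _ :=
    calc _ = Real.sqrt ((r1 : ℝ) * r2 * r3 / (n1 * n2 ^ 2 * n3) * lmax (modeOneUnfolding A) ^ 2) := by
          rw [Real.sqrt_mul' _ (sq_nonneg _), Real.sqrt_sq (lmax_nonneg _)]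
      _ ≤ Real.sqrt (enormE t3 ^ 2) := Real.sqrt_le_sqrt hsq
      _ = tri A _ _ _ := by
          rw [Real.sqrt_sq (enormE_nonneg _), tri_eq_dotProduct_reshape, ← hA2, dotProduct_comm,
            ht3.normalize_dotProduct]
  exact ⟨hmain, fun y1 y2 y3 hy1 _ hy2 _ hy3 _ =>
    (mul_le_mul_of_nonneg_left (tri_le_lmax_modeOneUnfolding A hy1 hy2 hy3)
      (Real.sqrt_nonneg _)).trans hmain⟩

/-- Theorem 3.3: approximation bound of Algorithm C0 (d = 3):
𝒜(x₁⁰,x₂⁰,x₃⁰) ≥ √(r₁r₂r₃/(n₁n₂²n₃))·λ_max(A₁) ≥ √(r₁r₂r₃/(n₁n₂²n₃))·v_opt. -/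
theorem stmt_12 {n1 n2 n3 : ℕ} (A : Fin n1 → Fin n2 → Fin n3 → ℝ) (hA : A ≠ 0)
    (r1 r2 r3 : ℕ) (hr1 : 1 ≤ r1 ∧ r1 ≤ n1) (hr2 : 1 ≤ r2 ∧ r2 ≤ n2)
    (hr3 : 1 ≤ r3 ∧ r3 ≤ n3)
    -- mode-1 unfolding A₁
    (A1 : Matrix (Fin n1) (Fin n2 × Fin n3) ℝ) (hA1 : A1 = fun i jk => A i jk.1 jk.2)
    -- leading singular vector pair of A₁ and truncation
    (xb1 : Fin n1 → ℝ) (wb1 : Fin n2 × Fin n3 → ℝ)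
    (hxb1 : enormE xb1 = 1) (hwb1 : enormE wb1 = 1)
    (hsv11 : A1.mulVec wb1 = fun i => lmax A1 * xb1 i)
    (hsv12 : A1.transpose.mulVec xb1 = fun p => lmax A1 * wb1 p)
    (t1 : Fin n1 → ℝ) (ht1 : IsTrunc xb1 r1 t1)
    (x1 : Fin n1 → ℝ) (hx1 : x1 = fun i => t1 i / enormE t1)
    -- A₂ = reshape(A₁ᵀ x₁⁰, n₂, n₃), its leading singular pair and truncation
    (A2 : Matrix (Fin n2) (Fin n3) ℝ) (hA2 : A2 = fun j k => A1.transpose.mulVec x1 (j, k))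
    (xb2 : Fin n2 → ℝ) (wb2 : Fin n3 → ℝ)
    (hxb2 : enormE xb2 = 1) (hwb2 : enormE wb2 = 1)
    (hsv21 : A2.mulVec wb2 = fun j => lmax A2 * xb2 j)
    (hsv22 : A2.transpose.mulVec xb2 = fun k => lmax A2 * wb2 k)
    (t2 : Fin n2 → ℝ) (ht2 : IsTrunc xb2 r2 t2)
    (x2 : Fin n2 → ℝ) (hx2 : x2 = fun j => t2 j / enormE t2)
    -- x₃⁰ = normalized r₃-truncation of A₂ᵀx₂⁰
    (t3 : Fin n3 → ℝ) (ht3 : IsTrunc (A2.transpose.mulVec x2) r3 t3)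
    (x3 : Fin n3 → ℝ) (hx3 : x3 = fun k => t3 k / enormE t3) :
    tri A x1 x2 x3 ≥
        Real.sqrt ((r1 : ℝ) * r2 * r3 / ((n1 : ℝ) * n2 ^ 2 * n3)) * lmax A1 ∧
      ∀ y1 y2 y3, enormE y1 = 1 → l0 y1 ≤ r1 → enormE y2 = 1 → l0 y2 ≤ r2 →
        enormE y3 = 1 → l0 y3 ≤ r3 →
        Real.sqrt ((r1 : ℝ) * r2 * r3 / ((n1 : ℝ) * n2 ^ 2 * n3)) * tri A y1 y2 y3 ≤
          tri A x1 x2 x3 :=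
  stmt_12_general A r1 r2 r3 A1 hA1 xb1 wb1 hxb1 hwb1 hsv11 t1 ht1 x1 hx1 A2 hA2 xb2 wb2 hxb2 hwb2
    hsv21 t2 ht2 x2 hx2 t3 ht3 x3 hx3
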